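/- Let N, d be positive natural numbers and f_Q, f_K, f_V ∈ [0,1]. On a probability space, let {q_r : r=1..d}, {k_{r,l} : r=1..d, l=1..N}, {v_l : l=1..N} be {0,1}-valued random variables forming one mutually independent family, with each q_r Bernoulli(f_Q), each k_{r,l} Bernoulli(f_K), and each v_l Bernoulli(f_V). Then the random variable I = Σ_{r=1}^{d} Σ_{l=1}^{N} q_r · k_{r,l} · v_l satisfies Var(I) = N·d·f_Q·f_K·f_V·( 1 − (N + d − 1)·f_Q·f_K·f_V + (d − 1)·f_Q·f_K + (N − 1)·f_K·f_V ). -/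

import Mathlib

open MeasureTheory ProbabilityTheory

lemma aux_integrable {Ω : Type*} [MeasurableSpace Ω] (μ : Measure Ω) [IsFiniteMeasure μ]
    {f : Ω → ℝ} (hm : Measurable f) (h01 : ∀ ω, f ω = 0 ∨ f ω = 1) :
    Integrable f μ := by
  refine (integrable_const (1:ℝ)).mono' hm.aestronglyMeasurable ?_
  filter_upwards with ω
  rcases h01 ω with h | h <;> simp [h]

lemma aux_integral_01 {Ω : Type*} [MeasurableSpace Ω] (μ : Measure Ω)
    {f : Ω → ℝ} (hm : Measurable f) (h01 : ∀ ω, f ω = 0 ∨ f ω = 1)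
    {c : ℝ} (hc : 0 ≤ c) (hμ : μ {ω | f ω = 1} = ENNReal.ofReal c) :
    ∫ ω, f ω ∂μ = c := by
  have hset : MeasurableSet {ω | f ω = 1} := hm (measurableSet_singleton 1)
  have hfun : f = Set.indicator {ω | f ω = 1} 1 := by
    funext ω
    rcases h01 ω with h | h <;> simp [Set.indicator_apply, h]
  rw [hfun, integral_indicator_one hset, measureReal_def, hμ, ENNReal.toReal_ofReal hc]

lemma aux_integral_prod {Ω ι : Type*} [MeasurableSpace Ω] [DecidableEq ι]
    (μ : Measure Ω) [IsProbabilityMeasure μ]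
    {F : ι → Ω → ℝ} (hmeas : ∀ i, Measurable (F i))
    (hindep : iIndepFun F μ)
    (S : Finset ι) :
    ∫ ω, ∏ i ∈ S, F i ω ∂μ = ∏ i ∈ S, ∫ ω, F i ω ∂μ := by
  classical
  induction S using Finset.induction_on with
  | empty => simp
  | @insert i S hi ih =>
    have h1 : IndepFun (∏ j ∈ S, F j) (F i) μ :=
      hindep.indepFun_finset_prod_of_notMem hmeas hi
    have hPm : Measurable (∏ j ∈ S, F j) := by
      have : (∏ j ∈ S, F j) = fun ω => ∏ j ∈ S, F j ω := by
        funext ω; simp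
      rw [this]
      exact Finset.measurable_prod _ fun j _ => hmeas j
    have h2 := h1.symm.integral_mul_eq_mul_integral (hmeas i).aestronglyMeasurable hPm.aestronglyMeasurable
    simp only [Finset.prod_insert hi]
    rw [← ih]
    have h3 : (fun ω => F i ω * ∏ j ∈ S, F j ω) = F i * ∏ j ∈ S, F j := by
      funext ω; simp
    calc ∫ ω, F i ω * ∏ j ∈ S, F j ω ∂μ = ∫ ω, (F i * ∏ j ∈ S, F j) ω ∂μ := by rw [h3]
      _ = (∫ ω, F i ω ∂μ) * ∫ ω, (∏ j ∈ S, F j) ω ∂μ := h2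
      _ = (∫ ω, F i ω ∂μ) * ∫ ω, ∏ j ∈ S, F j ω ∂μ := by
          congr 1; apply integral_congr_ae; filter_upwards with ω; simp

lemma aux_sum_ite_pair (n : ℕ) (x y : ℝ) :
    ∑ a : Fin n, ∑ b : Fin n, (if a = b then x else y) = n * x + ((n:ℝ)^2 - n) * y := by
  have h1 : ∀ a : Fin n, ∑ b : Fin n, (if a = b then x else y) = x + ((n:ℝ) - 1) * y := by
    intro a
    have h2 : ∀ b : Fin n, (if a = b then x else y) = y + (if a = b then x - y else 0) := by
      intro b; by_cases h : a = b <;> simp [h]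
    rw [Finset.sum_congr rfl (fun b _ => h2 b), Finset.sum_add_distrib, Finset.sum_const,
      Finset.sum_ite_eq, Finset.card_univ]
    simp; ring
  rw [Finset.sum_congr rfl (fun a _ => h1 a), Finset.sum_const, Finset.card_univ]
  simp; ring

/-- **Variance of the SSA pre-activation current.**
With `q r`, `k r l`, `v l` one mutually independent family of `{0,1}`-valued
Bernoulli random variables with firing rates `f_Q`, `f_K`, `f_V`, the random variable
`I = ∑ r ∑ l, q r · k r l · v l` satisfies
`Var(I) = N·d·f_Q·f_K·f_V·(1 − (N+d−1)·f_Q·f_K·f_V + (d−1)·f_Q·f_K + (N−1)·f_K·f_V)`. -/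
theorem ssa_variance
    {Ω : Type*} [MeasurableSpace Ω] (μ : Measure Ω) [IsProbabilityMeasure μ]
    (N d : ℕ) (hN : 0 < N) (hd : 0 < d)
    (fQ fK fV : ℝ) (hfQ0 : 0 ≤ fQ) (hfQ1 : fQ ≤ 1)
    (hfK0 : 0 ≤ fK) (hfK1 : fK ≤ 1) (hfV0 : 0 ≤ fV) (hfV1 : fV ≤ 1)
    (q : Fin d → Ω → ℝ) (k : Fin d → Fin N → Ω → ℝ) (v : Fin N → Ω → ℝ)
    (hqmeas : ∀ r, Measurable (q r)) (hkmeas : ∀ r l, Measurable (k r l))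
    (hvmeas : ∀ l, Measurable (v l))
    (hindep : iIndepFun
      (Sum.elim q (Sum.elim (fun rl : Fin d × Fin N => k rl.1 rl.2) v)) μ)
    (hq01 : ∀ r ω, q r ω = 0 ∨ q r ω = 1)
    (hk01 : ∀ r l ω, k r l ω = 0 ∨ k r l ω = 1)
    (hv01 : ∀ l ω, v l ω = 0 ∨ v l ω = 1)
    (hqBer : ∀ r, μ {ω | q r ω = 1} = ENNReal.ofReal fQ)
    (hkBer : ∀ r l, μ {ω | k r l ω = 1} = ENNReal.ofReal fK)
    (hvBer : ∀ l, μ {ω | v l ω = 1} = ENNReal.ofReal fV) :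
    variance (fun ω => ∑ r, ∑ l, q r ω * k r l ω * v l ω) μ =
      N * d * fQ * fK * fV *
        (1 - ((N : ℝ) + d - 1) * fQ * fK * fV
          + ((d : ℝ) - 1) * fQ * fK + ((N : ℝ) - 1) * fK * fV) := by
  classical
  set F : (Fin d ⊕ ((Fin d × Fin N) ⊕ Fin N)) → Ω → ℝ :=
    Sum.elim q (Sum.elim (fun rl : Fin d × Fin N => k rl.1 rl.2) v) with hF
  have hFmeas : ∀ i, Measurable (F i) := by
    rintro (r | rl | l)
    exacts [hqmeas r, hkmeas rl.1 rl.2, hvmeas l]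
  have hprod := aux_integral_prod μ hFmeas hindep
  have hEq : ∀ r, ∫ ω, q r ω ∂μ = fQ :=
    fun r => aux_integral_01 μ (hqmeas r) (hq01 r) hfQ0 (hqBer r)
  have hEk : ∀ r l, ∫ ω, k r l ω ∂μ = fK :=
    fun r l => aux_integral_01 μ (hkmeas r l) (hk01 r l) hfK0 (hkBer r l)
  have hEv : ∀ l, ∫ ω, v l ω ∂μ = fV :=
    fun l => aux_integral_01 μ (hvmeas l) (hv01 l) hfV0 (hvBer l)
  set X : Fin d × Fin N → Ω → ℝ := fun p ω => q p.1 ω * k p.1 p.2 ω * v p.2 ω with hX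
  have hXmeas : ∀ p, Measurable (X p) :=
    fun p => ((hqmeas p.1).mul (hkmeas p.1 p.2)).mul (hvmeas p.2)
  have hX01 : ∀ p ω, X p ω = 0 ∨ X p ω = 1 := by
    intro p ω
    rcases hq01 p.1 ω with h1 | h1 <;> rcases hk01 p.1 p.2 ω with h2 | h2 <;>
      rcases hv01 p.2 ω with h3 | h3 <;> simp [hX, h1, h2, h3]
  -- E[X p] = fQ * (fK * fV)
  have hE1 : ∀ p : Fin d × Fin N, ∫ ω, X p ω ∂μ = fQ * (fK * fV) := by
    rintro ⟨r, l⟩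
    have e2 : ∀ ω, X (r, l) ω =
        ∏ i ∈ ({Sum.inl r, Sum.inr (Sum.inl (r, l)), Sum.inr (Sum.inr l)} :
          Finset (Fin d ⊕ ((Fin d × Fin N) ⊕ Fin N))), F i ω := by
      intro ω
      rw [Finset.prod_insert (by simp), Finset.prod_insert (by simp), Finset.prod_singleton]
      simp [hX, hF]; ring
    simp_rw [e2]
    rw [hprod]
    rw [Finset.prod_insert (by simp), Finset.prod_insert (by simp), Finset.prod_singleton]
    simp only [hF, Sum.elim_inl, Sum.elim_inr]
    rw [hEq, hEk, hEv]
  -- pair expectations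
  have hXX : ∀ (r r' : Fin d) (l l' : Fin N), ∫ ω, X (r, l) ω * X (r', l') ω ∂μ =
      if r = r' then (if l = l' then fQ * (fK * fV) else fQ * (fK * fK * (fV * fV)))
      else (if l = l' then fQ * fQ * ((fK * fK) * fV)
        else fQ * fQ * ((fK * fK) * (fV * fV))) := by
    intro r r' l l'
    by_cases hr : r = r'
    · subst hr
      by_cases hl : l = l'
      · subst hl
        rw [if_pos rfl, if_pos rfl]
        have e0 : ∀ ω, X (r, l) ω * X (r, l) ω = X (r, l) ω := by
          intro ω; rcases hX01 (r, l) ω with h | h <;> rw [h] <;> ring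
        simp_rw [e0]
        exact hE1 (r, l)
      · rw [if_pos rfl, if_neg hl]
        have e2 : ∀ ω, X (r, l) ω * X (r, l') ω =
            ∏ i ∈ ({Sum.inl r, Sum.inr (Sum.inl (r, l)), Sum.inr (Sum.inl (r, l')),
              Sum.inr (Sum.inr l), Sum.inr (Sum.inr l')} :
              Finset (Fin d ⊕ ((Fin d × Fin N) ⊕ Fin N))), F i ω := by
          intro ω
          rw [Finset.prod_insert (by simp), Finset.prod_insert (by simp [hl]),
            Finset.prod_insert (by simp), Finset.prod_insert (by simp [hl]),
            Finset.prod_singleton]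
          simp only [hX, hF, Sum.elim_inl, Sum.elim_inr]
          have hq2 : q r ω * q r ω = q r ω := by
            rcases hq01 r ω with h | h <;> rw [h] <;> ring
          linear_combination (k r l ω * k r l' ω * v l ω * v l' ω) * hq2
        simp_rw [e2]
        rw [hprod]
        rw [Finset.prod_insert (by simp), Finset.prod_insert (by simp [hl]),
          Finset.prod_insert (by simp), Finset.prod_insert (by simp [hl]),
          Finset.prod_singleton]
        simp only [hF, Sum.elim_inl, Sum.elim_inr]
        rw [hEq, hEk, hEk, hEv, hEv]
        ring
    · by_cases hl : l = l'
      · subst hl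
        rw [if_neg hr, if_pos rfl]
        have e2 : ∀ ω, X (r, l) ω * X (r', l) ω =
            ∏ i ∈ ({Sum.inl r, Sum.inl r', Sum.inr (Sum.inl (r, l)),
              Sum.inr (Sum.inl (r', l)), Sum.inr (Sum.inr l)} :
              Finset (Fin d ⊕ ((Fin d × Fin N) ⊕ Fin N))), F i ω := by
          intro ω
          rw [Finset.prod_insert (by simp [hr]), Finset.prod_insert (by simp),
            Finset.prod_insert (by simp [hr]), Finset.prod_insert (by simp),
            Finset.prod_singleton]
          simp only [hX, hF, Sum.elim_inl, Sum.elim_inr]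
          have hv2 : v l ω * v l ω = v l ω := by
            rcases hv01 l ω with h | h <;> rw [h] <;> ring
          linear_combination (q r ω * q r' ω * k r l ω * k r' l ω) * hv2
        simp_rw [e2]
        rw [hprod]
        rw [Finset.prod_insert (by simp [hr]), Finset.prod_insert (by simp),
          Finset.prod_insert (by simp [hr]), Finset.prod_insert (by simp),
          Finset.prod_singleton]
        simp only [hF, Sum.elim_inl, Sum.elim_inr]
        rw [hEq, hEq, hEk, hEk, hEv]
        ring
      · rw [if_neg hr, if_neg hl]
        have e2 : ∀ ω, X (r, l) ω * X (r', l') ω =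
            ∏ i ∈ ({Sum.inl r, Sum.inl r', Sum.inr (Sum.inl (r, l)),
              Sum.inr (Sum.inl (r', l')), Sum.inr (Sum.inr l), Sum.inr (Sum.inr l')} :
              Finset (Fin d ⊕ ((Fin d × Fin N) ⊕ Fin N))), F i ω := by
          intro ω
          rw [Finset.prod_insert (by simp [hr]), Finset.prod_insert (by simp),
            Finset.prod_insert (by simp [hr, hl]), Finset.prod_insert (by simp),
            Finset.prod_insert (by simp [hl]), Finset.prod_singleton]
          simp only [hX, hF, Sum.elim_inl, Sum.elim_inr]
          ring
        simp_rw [e2]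
        rw [hprod]
        rw [Finset.prod_insert (by simp [hr]), Finset.prod_insert (by simp),
          Finset.prod_insert (by simp [hr, hl]), Finset.prod_insert (by simp),
          Finset.prod_insert (by simp [hl]), Finset.prod_singleton]
        simp only [hF, Sum.elim_inl, Sum.elim_inr]
        rw [hEq, hEq, hEk, hEk, hEv, hEv]
        ring
  -- rewrite the random variable as a single sum
  have hIeq : (fun ω => ∑ r, ∑ l, q r ω * k r l ω * v l ω) =
      fun ω => ∑ p : Fin d × Fin N, X p ω := by
    funext ω; rw [Fintype.sum_prod_type]
  rw [hIeq]
  have hImeas : Measurable (fun ω => ∑ p : Fin d × Fin N, X p ω) :=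
    Finset.measurable_sum _ fun p _ => hXmeas p
  have hmem : MemLp (fun ω => ∑ p : Fin d × Fin N, X p ω) 2 μ := by
    refine memLp_of_bounded (a := 0) (b := (Fintype.card (Fin d × Fin N) : ℝ)) ?_
      hImeas.aestronglyMeasurable 2
    filter_upwards with ω
    constructor
    · exact Finset.sum_nonneg fun p _ => by rcases hX01 p ω with h | h <;> simp [h]
    · calc ∑ p : Fin d × Fin N, X p ω ≤ ∑ _p : Fin d × Fin N, (1 : ℝ) :=
          Finset.sum_le_sum fun p _ => by rcases hX01 p ω with h | h <;> simp [h]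
        _ = _ := by simp
  rw [variance_eq_sub hmem]
  have hXint : ∀ p : Fin d × Fin N, Integrable (X p) μ :=
    fun p => aux_integrable μ (hXmeas p) (hX01 p)
  have hmean : (μ[fun ω => ∑ p : Fin d × Fin N, X p ω]) =
      ((d : ℝ) * N) * (fQ * (fK * fV)) := by
    rw [integral_finset_sum _ fun p _ => hXint p]
    rw [Finset.sum_congr rfl fun p _ => hE1 p, Finset.sum_const, Finset.card_univ]
    simp only [nsmul_eq_mul, Fintype.card_prod, Fintype.card_fin, Nat.cast_mul]
  have hXXint : ∀ p p' : Fin d × Fin N, Integrable (fun ω => X p ω * X p' ω) μ := by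
    intro p p'
    refine aux_integrable μ ((hXmeas p).mul (hXmeas p')) fun ω => ?_
    rcases hX01 p ω with h | h <;> rcases hX01 p' ω with h' | h' <;> simp [h, h']
  have hsq : (fun ω => ∑ p : Fin d × Fin N, X p ω) ^ 2 =
      fun ω => ∑ p : Fin d × Fin N, ∑ p' : Fin d × Fin N, X p ω * X p' ω := by
    funext ω; rw [Pi.pow_apply, sq, Finset.sum_mul_sum]
  have hmom2 : (μ[(fun ω => ∑ p : Fin d × Fin N, X p ω) ^ 2]) =
      (d : ℝ) * ((N : ℝ) * (fQ * (fK * fV)) + ((N : ℝ)^2 - N) * (fQ * (fK * fK * (fV * fV))))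
      + ((d : ℝ)^2 - d) * ((N : ℝ) * (fQ * fQ * ((fK * fK) * fV))
        + ((N : ℝ)^2 - N) * (fQ * fQ * ((fK * fK) * (fV * fV)))) := by
    rw [hsq]
    rw [integral_finset_sum _ fun p _ => integrable_finset_sum _ fun p' _ => hXXint p p']
    rw [Finset.sum_congr rfl fun p _ => integral_finset_sum _ fun p' _ => hXXint p p']
    have step1 : ∑ p : Fin d × Fin N, ∑ p' : Fin d × Fin N, ∫ ω, X p ω * X p' ω ∂μ =
        ∑ r : Fin d, ∑ r' : Fin d, ∑ l : Fin N, ∑ l' : Fin N,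
          (if r = r' then (if l = l' then fQ * (fK * fV) else fQ * (fK * fK * (fV * fV)))
            else (if l = l' then fQ * fQ * ((fK * fK) * fV)
              else fQ * fQ * ((fK * fK) * (fV * fV)))) := by
      rw [Fintype.sum_prod_type]
      refine Finset.sum_congr rfl fun r _ => ?_
      rw [Finset.sum_comm, Fintype.sum_prod_type]
      refine Finset.sum_congr rfl fun r' _ => ?_
      rw [Finset.sum_comm]
      exact Finset.sum_congr rfl fun l _ => Finset.sum_congr rfl fun l' _ => hXX r r' l l'
    rw [step1]
    have step2 : ∀ r r' : Fin d, ∑ l : Fin N, ∑ l' : Fin N,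
        (if r = r' then (if l = l' then fQ * (fK * fV) else fQ * (fK * fK * (fV * fV)))
          else (if l = l' then fQ * fQ * ((fK * fK) * fV)
            else fQ * fQ * ((fK * fK) * (fV * fV)))) =
        if r = r' then ((N : ℝ) * (fQ * (fK * fV)) + ((N : ℝ)^2 - N) * (fQ * (fK * fK * (fV * fV))))
        else ((N : ℝ) * (fQ * fQ * ((fK * fK) * fV))
          + ((N : ℝ)^2 - N) * (fQ * fQ * ((fK * fK) * (fV * fV)))) := by
      intro r r'
      by_cases h : r = r' <;> simp only [h, if_true, if_false] <;>
        exact aux_sum_ite_pair N _ _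
    rw [Finset.sum_congr rfl fun r _ => Finset.sum_congr rfl fun r' _ => step2 r r']
    rw [aux_sum_ite_pair d]
  rw [hmean, hmom2]
  push_cast
  ring
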